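/- arXiv:1504.07226 — 4 statements merged into one kernel-verified Lean document; each statement's English description precedes it below -/
import Mathlib

section
/- The free ℚ-vector space 𝐒𝐣 with basis the set of all surjections, equipped with the bilinear extension of the product ⋄, is an associative unital (non-commutative) ℚ-algebra, whose unit is the unique empty surjection from [0] = ∅ to itself. -/
open scoped Classical

noncomputable section

/-- Number of distinct letters of `w` smaller than `a`. -/
def rank (w : List ℕ) (a : ℕ) : ℕ := (w.dedup.filter (fun b => b < a)).length

/-- The packing of a word over the alphabet `ℕ` (letters are 0-indexed). -/
def pack (w : List ℕ) : List ℕ := w.map (rank w)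

/-- A packed word, i.e. a word equal to its own packing.  Packed words of length `n`
whose set of letters is `{0,…,k-1}` are exactly the surjections `[n] ↠ [k]`
(written with 0-indexed values). -/
def Packed (w : List ℕ) : Prop := pack w = w

/-- The type of surjections, encoded as packed words. -/
abbrev PW := {w : List ℕ // Packed w}

/-- `𝐒𝐣`, the free `ℚ`-vector space on the set of all surjections. -/
abbrev Sj := PW →₀ ℚ

/-- All lists of length `N` with letters `< N`. -/
def candidates (N : ℕ) : Finset (List ℕ) :=
  Finset.image (fun v : Fin N → Fin N => List.ofFn (fun i => (v i : ℕ))) Finset.univ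

/-- The (finite) set of surjections `h` appearing in the product `f ⋄ g`
of two surjections: the packed words `h` of length `|f| + |g|` such that
`pack` of the first `|f|` letters of `h` is `f` and `pack` of the remaining
letters is `g`. -/
def diamondSet (f g : List ℕ) : Finset PW :=
  ((candidates (f.length + g.length)).filter
    (fun w => Packed w ∧ pack (w.take f.length) = f ∧ pack (w.drop f.length) = g)).subtype Packed

/-- The product of two basis elements of `𝐒𝐣`. -/
def diamondPW (f g : PW) : Sj := ∑ h ∈ diamondSet f.1 g.1, Finsupp.single h 1

/-- The bilinear extension `⋄` of the product of surjections to `𝐒𝐣`. -/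
def diamond (F G : Sj) : Sj :=
  F.sum fun f a => G.sum fun g b => (a * b) • diamondPW f g

/-- The empty surjection from `[0] = ∅` to itself. -/
def emptyPW : PW := ⟨[], rfl⟩

/-- The unit of `𝐒𝐣`: the empty surjection. -/
def oneSj : Sj := Finsupp.single emptyPW 1

/-- Descent set (with positions written 1-indexed, as subsets of `[n-1] = {1,…,n-1}`):
`i ∈ Desc(f)` iff `1 ≤ i ≤ n-1` and `f(i) ≥ f(i+1)`. -/
def descSet (w : List ℕ) : Finset ℕ :=
  (Finset.Icc 1 (w.length - 1)).filter (fun i => w.getD i 0 ≤ w.getD (i - 1) 0)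

/-- The (finite) set of all surjections with source `[n]`. -/
def SjWords (n : ℕ) : Finset PW :=
  ((candidates n).filter Packed).subtype Packed

/-- `D^n_{⊆ I}`: the sum of all surjections from `[n]` with descent set contained in `I`. -/
def Dsub (n : ℕ) (I : Finset ℕ) : Sj :=
  ∑ f ∈ (SjWords n).filter (fun f => descSet f.1 ⊆ I), Finsupp.single f 1

/-- `D^n_I`: the sum of all surjections from `[n]` with descent set equal to `I`. -/
def Deq (n : ℕ) (I : Finset ℕ) : Sj :=
  ∑ f ∈ (SjWords n).filter (fun f => descSet f.1 = I), Finsupp.single f 1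

lemma length_filter_lt_range (n i : ℕ) :
    ((List.range n).filter (fun x => x < i)).length = min i n := by
  induction n with
  | zero => simp
  | succ n ih =>
    rw [List.range_succ, List.filter_append, List.length_append, ih]
    by_cases h : n < i
    · simp [h]; omega
    · simp [h]; omega

lemma packed_range (n : ℕ) : Packed (List.range n) := by
  unfold Packed pack rank
  rw [List.dedup_eq_self.mpr (List.nodup_range (n := n))]
  apply List.ext_getElem (by simp)
  intro i h1 h2
  simp only [List.getElem_map, List.getElem_range, length_filter_lt_range]
  have : i < n := by simpa using h2
  omega

/-- `p_n`, the identity surjection of `[n]` (0-indexed: the word `0 1 ⋯ (n-1)`). -/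
def pWord (n : ℕ) : PW := ⟨List.range n, packed_range n⟩

/-- The set `{n₁, n₁+n₂, …, n₁+⋯+n_{k-1}}` of proper partial sums of a composition. -/
def psumsSet (c : List ℕ) : Finset ℕ :=
  (Finset.range (c.length - 1)).image (fun i => (c.take (i + 1)).sum)

/-- Iterated `⋄`-product `p_{n₁} ⋄ p_{n₂} ⋄ ⋯ ⋄ p_{n_k}` of identity surjections. -/
def diamondProd (c : List ℕ) : Sj :=
  (c.map (fun m => Finsupp.single (pWord m) (1 : ℚ))).foldr diamond oneSj

/-!
Packing commutes with passing to a factor: `pack` of a factor of `pack w` is `pack` of the same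
factor of `w`, since `pack` is invariant under order-preserving relabellings. Hence a surjection
`w` occurs in `(f ⋄ g) ⋄ h`, and also in `f ⋄ (g ⋄ h)`, exactly when its three consecutive blocks
of lengths `|f|, |g|, |h|` pack to `f, g, h`, and it occurs only once on each side: the
intermediate term is recovered as the packing of the first two blocks (resp. the last two). The
empty surjection is a two-sided unit, and `0 ⋄ 00` contains `011` while `00 ⋄ 0` does not.
-/

lemma rank_eq_card (w : List ℕ) (a : ℕ) :
    rank w a = (w.toFinset.filter (· < a)).card := by
  rw [rank, ← List.toFinset_card_of_nodup (w.nodup_dedup.filter _)]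
  congr 1
  ext x
  simp

lemma rank_strictMonoOn (w : List ℕ) : StrictMonoOn (rank w) {a | a ∈ w} := by
  intro a ha b _ hab
  rw [rank_eq_card, rank_eq_card]
  refine Finset.card_lt_card ⟨Finset.monotone_filter_right _ fun x _ hx => hx.trans hab, ?_⟩
  intro hsub
  simpa using hsub (Finset.mem_filter.mpr ⟨List.mem_toFinset.mpr ha, hab⟩)

lemma rank_lt_length_of_mem {w : List ℕ} {a : ℕ} (ha : a ∈ w) : rank w a < w.length := by
  rw [rank_eq_card]
  calc (w.toFinset.filter (· < a)).card < w.toFinset.card :=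
        Finset.card_lt_card (Finset.filter_ssubset.mpr ⟨a, List.mem_toFinset.mpr ha, lt_irrefl a⟩)
    _ ≤ w.length := w.toFinset_card_le

lemma rank_map_of_strictMonoOn {w : List ℕ} {F : ℕ → ℕ} (hF : StrictMonoOn F {a | a ∈ w})
    {a : ℕ} (ha : a ∈ w) : rank (w.map F) (F a) = rank w a := by
  have himage : (w.map F).toFinset = w.toFinset.image F := by
    ext x
    simp
  rw [rank_eq_card, rank_eq_card, himage, Finset.filter_image,
    Finset.card_image_of_injOn (hF.injOn.mono fun x hx => by simp_all)]
  congr 1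
  exact Finset.filter_congr fun x hx => hF.lt_iff_lt (by simpa using hx) ha

lemma pack_map_of_strictMonoOn {w : List ℕ} {F : ℕ → ℕ} (hF : StrictMonoOn F {a | a ∈ w}) :
    pack (w.map F) = pack w := by
  rw [pack, pack, List.map_map]
  exact List.map_congr_left fun a ha => rank_map_of_strictMonoOn hF ha

lemma pack_map_rank {u w : List ℕ} (h : u ⊆ w) : pack (u.map (rank w)) = pack u :=
  pack_map_of_strictMonoOn ((rank_strictMonoOn w).mono fun _ ha => h ha)

lemma length_pack (w : List ℕ) : (pack w).length = w.length :=
  List.length_map _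

lemma packed_pack (w : List ℕ) : Packed (pack w) :=
  pack_map_rank (List.Subset.refl w)

lemma pack_take_pack (w : List ℕ) (n : ℕ) : pack ((pack w).take n) = pack (w.take n) := by
  change pack ((w.map (rank w)).take n) = _
  rw [← List.map_take]
  exact pack_map_rank (List.take_subset n w)

lemma pack_drop_pack (w : List ℕ) (n : ℕ) : pack ((pack w).drop n) = pack (w.drop n) := by
  change pack ((w.map (rank w)).drop n) = _
  rw [← List.map_drop]
  exact pack_map_rank (List.drop_subset n w)

lemma Packed.lt_length {w : List ℕ} (hw : Packed w) {a : ℕ} (ha : a ∈ w) : a < w.length := by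
  rw [← hw, pack, List.mem_map] at ha
  obtain ⟨b, hb, rfl⟩ := ha
  exact rank_lt_length_of_mem hb

lemma mem_candidates {N : ℕ} {w : List ℕ} :
    w ∈ candidates N ↔ w.length = N ∧ ∀ a ∈ w, a < N := by
  rw [candidates, Finset.mem_image]
  constructor
  · rintro ⟨v, -, rfl⟩
    refine ⟨by simp, fun a ha => ?_⟩
    obtain ⟨i, rfl⟩ := List.mem_ofFn.mp ha
    exact (v i).isLt
  · rintro ⟨rfl, hlt⟩
    refine ⟨fun i => ⟨w[(i : ℕ)], hlt _ (List.getElem_mem _)⟩, Finset.mem_univ _, ?_⟩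
    exact List.ext_getElem (by simp) fun i _ _ => by simp

lemma mem_diamondSet {f g : List ℕ} {w : PW} :
    w ∈ diamondSet f g ↔ w.1.length = f.length + g.length ∧
      pack (w.1.take f.length) = f ∧ pack (w.1.drop f.length) = g := by
  rw [diamondSet, Finset.mem_subtype, Finset.mem_filter, mem_candidates]
  constructor
  · rintro ⟨⟨hlen, -⟩, -, hf, hg⟩
    exact ⟨hlen, hf, hg⟩
  · rintro ⟨hlen, hf, hg⟩
    exact ⟨⟨hlen, fun a ha => hlen ▸ w.2.lt_length ha⟩, w.2, hf, hg⟩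

def PacksBlockwise (w f g h : List ℕ) : Prop :=
  w.length = f.length + g.length + h.length ∧ pack (w.take f.length) = f ∧
    pack ((w.drop f.length).take g.length) = g ∧ pack (w.drop (f.length + g.length)) = h

lemma mem_biUnion_diamondSet_left {f g h : List ℕ} {w : PW} :
    w ∈ (diamondSet f g).biUnion (fun u => diamondSet u.1 h) ↔ PacksBlockwise w.1 f g h := by
  have hdrop : ∀ n m, (w.1.take (n + m)).drop n = (w.1.drop n).take m := fun n m => by
    rw [List.drop_take, Nat.add_sub_cancel_left]
  simp only [Finset.mem_biUnion, mem_diamondSet, PacksBlockwise]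
  constructor
  · rintro ⟨u, ⟨hu, hf, hg⟩, hw, hu', hh⟩
    rw [hu] at hw hu' hh
    refine ⟨hw, ?_, ?_, hh⟩
    · rwa [← hu', pack_take_pack, List.take_take, min_eq_left (Nat.le_add_right _ _)] at hf
    · rwa [← hu', pack_drop_pack, hdrop] at hg
  · rintro ⟨hw, hf, hg, hh⟩
    have hu : (pack (w.1.take (f.length + g.length))).length = f.length + g.length := by
      rw [length_pack, List.length_take]
      omega
    refine ⟨⟨_, packed_pack (w.1.take (f.length + g.length))⟩, ⟨hu, ?_, ?_⟩, ?_, ?_, ?_⟩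
    · rw [pack_take_pack, List.take_take, min_eq_left (Nat.le_add_right _ _), hf]
    · rw [pack_drop_pack, hdrop, hg]
    · rw [hu, hw]
    · rw [hu]
    · rw [hu, hh]

lemma mem_biUnion_diamondSet_right {f g h : List ℕ} {w : PW} :
    w ∈ (diamondSet g h).biUnion (fun v => diamondSet f v.1) ↔ PacksBlockwise w.1 f g h := by
  simp only [Finset.mem_biUnion, mem_diamondSet, PacksBlockwise]
  constructor
  · rintro ⟨v, ⟨hv, hg, hh⟩, hw, hf, hv'⟩
    refine ⟨by omega, hf, ?_, ?_⟩
    · rwa [← hv', pack_take_pack] at hg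
    · rwa [← hv', pack_drop_pack, List.drop_drop] at hh
  · rintro ⟨hw, hf, hg, hh⟩
    have hv : (pack (w.1.drop f.length)).length = g.length + h.length := by
      rw [length_pack, List.length_drop]
      omega
    refine ⟨⟨_, packed_pack (w.1.drop f.length)⟩, ⟨hv, ?_, ?_⟩, ?_, hf, rfl⟩
    · rw [pack_take_pack, hg]
    · rw [pack_drop_pack, List.drop_drop, hh]
    · rw [hv, hw, Nat.add_assoc]

lemma pairwise_disjoint_diamondSet_left (h : List ℕ) :
    Pairwise (Function.onFun Disjoint fun u : PW => diamondSet u.1 h) := by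
  intro u u' hne
  refine Finset.disjoint_left.mpr fun w hw hw' => hne ?_
  rw [mem_diamondSet] at hw hw'
  have hlen : u.1.length = u'.1.length := by omega
  exact Subtype.ext (by rw [← hw.2.1, ← hw'.2.1, hlen])

lemma pairwise_disjoint_diamondSet_right (f : List ℕ) :
    Pairwise (Function.onFun Disjoint fun v : PW => diamondSet f v.1) := by
  intro v v' hne
  refine Finset.disjoint_left.mpr fun w hw hw' => hne ?_
  rw [mem_diamondSet] at hw hw'
  exact Subtype.ext (by rw [← hw.2.2, ← hw'.2.2])

lemma sum_diamondPW_assoc (f g h : PW) :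
    ∑ u ∈ diamondSet f.1 g.1, diamondPW u h = ∑ v ∈ diamondSet g.1 h.1, diamondPW f v := by
  simp only [diamondPW]
  rw [← Finset.sum_biUnion ((pairwise_disjoint_diamondSet_left h.1).set_pairwise _),
    ← Finset.sum_biUnion ((pairwise_disjoint_diamondSet_right f.1).set_pairwise _)]
  congr 1
  ext w
  rw [mem_biUnion_diamondSet_left, mem_biUnion_diamondSet_right]

lemma diamondSet_nil_left (g : PW) : diamondSet [] g.1 = {g} := by
  ext w
  have hw : pack w.1 = w.1 := w.2
  simp only [mem_diamondSet, Finset.mem_singleton, Subtype.ext_iff, List.length_nil,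
    List.take_zero, List.drop_zero, zero_add, hw]
  exact ⟨fun h => h.2.2, fun h => ⟨h ▸ rfl, rfl, h⟩⟩

lemma diamondSet_nil_right (f : PW) : diamondSet f.1 [] = {f} := by
  ext w
  have hw : pack w.1 = w.1 := w.2
  simp only [mem_diamondSet, Finset.mem_singleton, Subtype.ext_iff, List.length_nil, add_zero]
  constructor
  · rintro ⟨hlen, hf, -⟩
    rwa [List.take_of_length_le hlen.le, hw] at hf
  · intro h
    rw [← h, List.take_length, List.drop_length, hw]
    exact ⟨rfl, rfl, rfl⟩

lemma diamondPW_emptyPW_left (g : PW) : diamondPW emptyPW g = Finsupp.single g 1 := by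
  rw [diamondPW, emptyPW, diamondSet_nil_left, Finset.sum_singleton]

lemma diamondPW_emptyPW_right (f : PW) : diamondPW f emptyPW = Finsupp.single f 1 := by
  rw [diamondPW, emptyPW, diamondSet_nil_right, Finset.sum_singleton]

def diamondₗ : Sj →ₗ[ℚ] Sj →ₗ[ℚ] Sj :=
  Finsupp.linearCombination ℚ fun f => Finsupp.linearCombination ℚ (diamondPW f)

lemma diamondₗ_single_single (f g : PW) (a b : ℚ) :
    diamondₗ (Finsupp.single f a) (Finsupp.single g b) = (a * b) • diamondPW f g := by
  simp [diamondₗ, mul_smul]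

lemma diamond_eq_diamondₗ (F G : Sj) : diamond F G = diamondₗ F G := by
  simp only [diamond, diamondₗ, Finsupp.linearCombination_apply, LinearMap.finsupp_sum_apply,
    LinearMap.smul_apply, Finsupp.smul_sum, mul_smul]

lemma diamondₗ_assoc (F G H : Sj) :
    diamondₗ (diamondₗ F G) H = diamondₗ F (diamondₗ G H) := by
  -- both sides as trilinear maps in `F G H`, compared on basis elements
  have : diamondₗ.compr₂ diamondₗ =
      (LinearMap.llcomp ℚ Sj Sj Sj ∘ₗ diamondₗ).compl₂ diamondₗ := by
    ext f g h : 6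
    simpa [diamondPW, diamondₗ_single_single] using sum_diamondPW_assoc f g h
  exact congr($this F G H)

lemma diamondₗ_oneSj : diamondₗ oneSj = LinearMap.id := by
  ext g : 2
  simp [oneSj, diamondₗ_single_single, diamondPW_emptyPW_left]

lemma diamondₗ_flip_oneSj : diamondₗ.flip oneSj = LinearMap.id := by
  ext f : 2
  simp [oneSj, diamondₗ_single_single, diamondPW_emptyPW_right]

lemma diamondPW_apply (f g w : PW) :
    diamondPW f g w = if w ∈ diamondSet f.1 g.1 then 1 else 0 := by
  simp only [diamondPW, Finsupp.finsetSum_apply, Finsupp.single_apply, Finset.sum_ite_eq']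

lemma exists_diamondPW_ne_comm : ∃ f g : PW, diamondPW f g ≠ diamondPW g f := by
  let f : PW := ⟨[0], (by decide : pack [0] = [0])⟩
  let g : PW := ⟨[0, 0], (by decide : pack [0, 0] = [0, 0])⟩
  let w : PW := ⟨[0, 1, 1], (by decide : pack [0, 1, 1] = [0, 1, 1])⟩
  have hfg : w ∈ diamondSet f.1 g.1 := mem_diamondSet.mpr (by decide)
  have hgf : w ∉ diamondSet g.1 f.1 := fun h => absurd (mem_diamondSet.mp h).2.1 (by decide)
  refine ⟨f, g, fun h => ?_⟩
  have hw := congr($h w)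
  rw [diamondPW_apply, diamondPW_apply, if_pos hfg, if_neg hgf] at hw
  exact one_ne_zero hw

/-- The free ℚ-vector space `𝐒𝐣` with basis the set of all surjections,
equipped with the bilinear extension of the product `⋄`, is an associative unital
(non-commutative) ℚ-algebra whose unit is the unique empty surjection from `[0] = ∅`
to itself. -/
theorem Sj_is_associative_unital_noncommutative_algebra :
    (∀ F G H : Sj, diamond (diamond F G) H = diamond F (diamond G H)) ∧
    (∀ F : Sj, diamond oneSj F = F) ∧
    (∀ F : Sj, diamond F oneSj = F) ∧
    (∀ (a : ℚ) (F G : Sj), diamond (a • F) G = a • diamond F G) ∧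
    (∀ (a : ℚ) (F G : Sj), diamond F (a • G) = a • diamond F G) ∧
    (∀ F F' G : Sj, diamond (F + F') G = diamond F G + diamond F' G) ∧
    (∀ F G G' : Sj, diamond F (G + G') = diamond F G + diamond F G') ∧
    ¬ (∀ F G : Sj, diamond F G = diamond G F) := by
  simp only [diamond_eq_diamondₗ]
  refine ⟨diamondₗ_assoc, fun F => by rw [diamondₗ_oneSj, LinearMap.id_apply],
    fun F => by rw [← LinearMap.flip_apply, diamondₗ_flip_oneSj, LinearMap.id_apply],
    fun a F G => by rw [map_smul, LinearMap.smul_apply], fun a F G => map_smul _ a G,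
    fun F F' G => by rw [map_add, LinearMap.add_apply], fun F G G' => map_add _ G G',
    fun hcomm => ?_⟩
  obtain ⟨f, g, hfg⟩ := exists_diamondPW_ne_comm
  have := hcomm (Finsupp.single f 1) (Finsupp.single g 1)
  rw [diamondₗ_single_single, diamondₗ_single_single, one_mul, one_smul, one_smul] at this
  exact hfg this

end
end

section
/- The quasi-shuffle product ⧢ on T(A) admits the following explicit expression in terms of surjections: for all n, m ≥ 1 and all a_1,…,a_n, b_1,…,b_m ∈ A, a_1⋯a_n ⧢ b_1⋯b_m = ∑_f f(a_1⋯a_n b_1⋯b_m), where f runs over all surjections from [n+m] onto [k] for max(n,m) ≤ k ≤ n+m such that f(1) < f(2) < ⋯ < f(n) and f(n+1) < f(n+2) < ⋯ < f(n+m), and where for a surjection f from [N] onto [p] and letters c_1,…,c_N ∈ A one sets f(c_1⋯c_N) := (∗-product of the c_j for j ∈ f^{-1}(1)) ⊗ ⋯ ⊗ (∗-product of the c_j for j ∈ f^{-1}(p)) ∈ A^{⊗p}. -/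
/-! Both sides satisfy the recursion defining `⧢`. For a surjection `f` on the right-hand side
with image `[k]`, monotonicity on the two blocks forces the fiber `f⁻¹(k)` to consist of `n`,
of `n + m`, or of both. Removing that fiber leaves a surjection of the same kind for
`a₁⋯aₙ₋₁ ⧢ b₁⋯bₘ`, `a₁⋯aₙ ⧢ b₁⋯bₘ₋₁` or `a₁⋯aₙ₋₁ ⧢ b₁⋯bₘ₋₁` respectively, and strips the last
letter `aₙ`, `bₘ` or `aₙ ∗ bₘ`: these are the terms `↑`, `↓` and `•`. -/

open scoped Classical

noncomputable section

variable {A : Type*} [AddCommGroup A] [Module ℚ A]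

/-- The word `a₁⋯a_n` as an element of the tensor module
`T(A) = ⊕_{n ≥ 0} A^{⊗n}`, realized as the tensor algebra of the module `A`
(its product is concatenation of words). -/
def word (l : List A) : TensorAlgebra ℚ A :=
  (l.map fun a => TensorAlgebra.ι ℚ a).prod

/-- Product (under a bilinear multiplication `mul` on `A`) of a nonempty list of elements
of `A`; by convention the empty product is `0` (it never occurs below, since the fibers
of a surjection are nonempty). -/
def listProd (mul : A →ₗ[ℚ] A →ₗ[ℚ] A) : List A → A
  | [] => 0
  | x :: xs => xs.foldl (fun acc y => mul acc y) x

@[simp]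
theorem Fin.last_ne_castSucc {n : ℕ} (i : Fin n) : Fin.last n ≠ i.castSucc :=
  (Fin.castSucc_ne_last i).symm

theorem Fin.exists_fin_add {n m : ℕ} {P : Fin (n + m) → Prop} :
    (∃ i, P i) ↔ (∃ i, P (Fin.castAdd m i)) ∨ ∃ j, P (Fin.natAdd n j) := by
  constructor
  · rintro ⟨i, hi⟩
    induction i using Fin.addCases
    exacts [.inl ⟨_, hi⟩, .inr ⟨_, hi⟩]
  · rintro (⟨i, hi⟩ | ⟨j, hj⟩)
    exacts [⟨_, hi⟩, ⟨_, hj⟩]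

section

variable {β : Type*} [Preorder β] {n m : ℕ} {f : Fin (n + m) → β}

theorem strictMono_comp_castAdd_iff :
    StrictMono (fun i => f (Fin.castAdd m i)) ↔
      ∀ i j : Fin (n + m), i < j → (j : ℕ) < n → f i < f j := by
  refine ⟨fun hf i j hij hj => ?_, fun hf i j hij => hf _ _ hij (by simp)⟩
  obtain ⟨i, rfl⟩ : ∃ i', Fin.castAdd m i' = i := ⟨⟨i, (Fin.lt_def.1 hij).trans hj⟩, rfl⟩
  obtain ⟨j, rfl⟩ : ∃ j', Fin.castAdd m j' = j := ⟨⟨j, hj⟩, rfl⟩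
  exact hf hij

theorem strictMono_comp_natAdd_iff :
    StrictMono (fun j => f (Fin.natAdd n j)) ↔
      ∀ i j : Fin (n + m), i < j → n ≤ (i : ℕ) → f i < f j := by
  refine ⟨fun hf i j hij hi => ?_, fun hf i j hij => hf _ _ (by simpa using hij) (by simp)⟩
  obtain ⟨i, rfl⟩ : ∃ i', Fin.natAdd n i' = i := ⟨⟨i - n, by omega⟩, Fin.ext (by simp; omega)⟩
  obtain ⟨j, rfl⟩ : ∃ j', Fin.natAdd n j' = j :=
    ⟨⟨j - n, by simp [Fin.lt_def] at hij; omega⟩, Fin.ext (by simp [Fin.lt_def] at hij ⊢; omega)⟩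
  exact hf (by simpa using hij)

end

theorem Finset.sum_split_of_forall_or {ι M : Type*} [AddCommMonoid M] {s : Finset ι}
    {P Q : ι → Prop} [DecidablePred P] [DecidablePred Q] (hPQ : ∀ x ∈ s, P x ∨ Q x) (F : ι → M) :
    ∑ x ∈ s, F x = ∑ x ∈ s with P x ∧ ¬Q x, F x + ∑ x ∈ s with ¬P x ∧ Q x, F x +
      ∑ x ∈ s with P x ∧ Q x, F x := by
  simp only [Finset.sum_filter, ← Finset.sum_add_distrib]
  refine Finset.sum_congr rfl fun x hx => ?_
  have := hPQ x hx
  by_cases P x <;> by_cases Q x <;> simp_all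

namespace QuasiShuffle

variable {α : Type*} {n m k : ℕ}

def fiber (a : Fin n → α) (g : Fin n → Fin k) (t : Fin k) : List α :=
  ((List.finRange n).filter (g · = t)).map a

def snocLast (g : Fin n → Fin k) : Fin (n + 1) → Fin (k + 1) :=
  Fin.snoc (α := fun _ => Fin (k + 1)) (fun i => (g i).castSucc) (Fin.last k)

@[simp]
lemma snocLast_castSucc (g : Fin n → Fin k) (i : Fin n) :
    snocLast g i.castSucc = (g i).castSucc := by
  simp [snocLast]

@[simp]
lemma snocLast_last (g : Fin n → Fin k) : snocLast g (Fin.last n) = Fin.last k := by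
  simp [snocLast]

lemma snocLast_injective : Function.Injective (snocLast : (Fin n → Fin k) → _) := by
  intro g g' h
  funext i
  simpa using congrFun h i.castSucc

lemma strictMono_castSucc_comp_iff {g : Fin n → Fin k} :
    StrictMono (fun i => (g i).castSucc) ↔ StrictMono g := by
  simp [StrictMono]

lemma strictMono_snocLast_iff {g : Fin n → Fin k} :
    StrictMono (snocLast g) ↔ StrictMono g := by
  simp [StrictMono, Fin.forall_fin_succ', Fin.castSucc_lt_last, Fin.le_last]

@[simp]
lemma fiber_snocLast_castSucc (a : Fin (n + 1) → α) (g : Fin n → Fin k) (t : Fin k) :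
    fiber a (snocLast g) t.castSucc = fiber (Fin.init a) g t := by
  simp [fiber, List.finRange_succ_last, List.filter_map, Function.comp_def, Fin.init]

@[simp]
lemma fiber_snocLast_last (a : Fin (n + 1) → α) (g : Fin n → Fin k) :
    fiber a (snocLast g) (Fin.last k) = [a (Fin.last n)] := by
  simp [fiber, List.finRange_succ_last]

@[simp]
lemma fiber_castSucc_castSucc (a : Fin n → α) (g : Fin n → Fin k) (t : Fin k) :
    fiber a (fun i => (g i).castSucc) t.castSucc = fiber a g t := by
  simp [fiber]

@[simp]
lemma fiber_castSucc_last (a : Fin n → α) (g : Fin n → Fin k) :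
    fiber a (fun i => (g i).castSucc) (Fin.last k) = [] := by
  simp [fiber]

@[simp]
lemma fiber_zero (a : Fin 0 → α) (g : Fin 0 → Fin k) (t : Fin k) : fiber a g t = [] := rfl

lemma fiber_id (a : Fin n → α) (t : Fin n) : fiber a id t = [a t] := by
  simp [fiber, List.filter_eq, List.count_eq_one_of_mem (List.nodup_finRange n)]

lemma fiber_add (c : Fin (n + m) → α) (f : Fin (n + m) → Fin k) (t : Fin k) :
    fiber c f t = fiber (fun i => c (Fin.castAdd m i)) (fun i => f (Fin.castAdd m i)) t ++
      fiber (fun j => c (Fin.natAdd n j)) (fun j => f (Fin.natAdd n j)) t := by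
  rw [fiber, ← List.ofFn_id, List.ofFn_add]
  simp [fiber, List.ofFn_eq_map, List.filter_map, Function.comp_def, Fin.castAdd]

lemma exists_snocLast_eq {g : Fin (n + 1) → Fin (k + 1)} (hg : StrictMono g)
    (hlast : g (Fin.last n) = Fin.last k) : ∃ g', snocLast g' = g := by
  refine ⟨fun i => (g i.castSucc).castPred (hlast ▸ hg (Fin.castSucc_lt_last i)).ne, ?_⟩
  funext i
  induction i using Fin.lastCases <;> simp [hlast]

lemma exists_castSucc_eq {g : Fin n → Fin (k + 1)} (hg : ∀ i, g i ≠ Fin.last k) :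
    ∃ g' : Fin n → Fin k, (fun i => (g' i).castSucc) = g :=
  ⟨fun i => (g i).castPred (hg i), by simp⟩

lemma apply_last_eq_last {g : Fin (n + 1) → Fin (k + 1)} (hg : Monotone g) {i : Fin (n + 1)}
    (hi : g i = Fin.last k) : g (Fin.last n) = Fin.last k :=
  le_antisymm (Fin.le_last _) (hi ▸ hg (Fin.le_last i))

/-- A surjection `f : [n + m] ↠ [k]` increasing on the first `n` and on the last `m` points,
recorded by its restrictions to these two blocks. -/
def quasiShuffles (n m k : ℕ) : Finset ((Fin n → Fin k) × (Fin m → Fin k)) :=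
  {p | StrictMono p.1 ∧ StrictMono p.2 ∧ ∀ t, (∃ i, p.1 i = t) ∨ ∃ j, p.2 j = t}

lemma mem_quasiShuffles {p : (Fin n → Fin k) × (Fin m → Fin k)} :
    p ∈ quasiShuffles n m k ↔
      StrictMono p.1 ∧ StrictMono p.2 ∧ ∀ t, (∃ i, p.1 i = t) ∨ ∃ j, p.2 j = t := by
  simp [quasiShuffles]

lemma quasiShuffles_eq_empty (hk : k < n ∨ k < m ∨ n + m < k) : quasiShuffles n m k = ∅ := by
  refine Finset.eq_empty_of_forall_notMem fun p hp => ?_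
  obtain ⟨hg, hh, hcover⟩ := mem_quasiShuffles.1 hp
  have hsurj : Function.Surjective (Fin.append p.1 p.2) := fun t => by
    rcases hcover t with ⟨i, rfl⟩ | ⟨j, rfl⟩
    exacts [⟨Fin.castAdd m i, Fin.append_left _ _ _⟩, ⟨Fin.natAdd n j, Fin.append_right _ _ _⟩]
  have h1 := Fintype.card_le_of_injective _ hg.injective
  have h2 := Fintype.card_le_of_injective _ hh.injective
  have h3 := Fintype.card_le_of_surjective _ hsurj
  simp only [Fintype.card_fin] at h1 h2 h3
  omega

lemma quasiShuffles_zero_left : quasiShuffles 0 m m = {(Fin.elim0, id)} := by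
  refine Finset.eq_singleton_iff_unique_mem.2 ⟨?_, fun p hp => ?_⟩
  · exact mem_quasiShuffles.2 ⟨fun i => i.elim0, strictMono_id, fun t => .inr ⟨t, rfl⟩⟩
  · obtain ⟨-, hh, hcover⟩ := mem_quasiShuffles.1 hp
    have hrange : Set.range p.2 = Set.range id := by
      simpa [Set.eq_univ_iff_forall] using hcover
    exact Prod.ext (Subsingleton.elim _ _) ((hh.range_inj strictMono_id).1 hrange)

lemma quasiShuffles_zero_right : quasiShuffles n 0 n = {(id, Fin.elim0)} := by
  refine Finset.eq_singleton_iff_unique_mem.2 ⟨?_, fun p hp => ?_⟩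
  · exact mem_quasiShuffles.2 ⟨strictMono_id, fun i => i.elim0, fun t => .inl ⟨t, rfl⟩⟩
  · obtain ⟨hg, -, hcover⟩ := mem_quasiShuffles.1 hp
    have hrange : Set.range p.1 = Set.range id := by
      simpa [Set.eq_univ_iff_forall] using hcover
    exact Prod.ext ((hg.range_inj strictMono_id).1 hrange) (Subsingleton.elim _ _)

lemma snocLast_castSucc_mem_quasiShuffles {g : Fin n → Fin k} {h : Fin m → Fin k} :
    (snocLast g, fun j => (h j).castSucc) ∈ quasiShuffles (n + 1) m (k + 1) ↔
      (g, h) ∈ quasiShuffles n m k := by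
  simp [mem_quasiShuffles, strictMono_snocLast_iff, strictMono_castSucc_comp_iff,
    Fin.forall_fin_succ', Fin.exists_fin_succ']

lemma castSucc_snocLast_mem_quasiShuffles {g : Fin n → Fin k} {h : Fin m → Fin k} :
    (fun i => (g i).castSucc, snocLast h) ∈ quasiShuffles n (m + 1) (k + 1) ↔
      (g, h) ∈ quasiShuffles n m k := by
  simp [mem_quasiShuffles, strictMono_snocLast_iff, strictMono_castSucc_comp_iff,
    Fin.forall_fin_succ', Fin.exists_fin_succ']

lemma snocLast_snocLast_mem_quasiShuffles {g : Fin n → Fin k} {h : Fin m → Fin k} :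
    (snocLast g, snocLast h) ∈ quasiShuffles (n + 1) (m + 1) (k + 1) ↔
      (g, h) ∈ quasiShuffles n m k := by
  simp [mem_quasiShuffles, strictMono_snocLast_iff,
    Fin.forall_fin_succ', Fin.exists_fin_succ']

section Pieces

variable {M : Type*} [AddCommMonoid M]

lemma sum_quasiShuffles_left_hits_last
    (F : (Fin (n + 1) → Fin (k + 1)) × (Fin m → Fin (k + 1)) → M) :
    ∑ p ∈ quasiShuffles (n + 1) m (k + 1) with
        (∃ i, p.1 i = Fin.last k) ∧ ¬∃ j, p.2 j = Fin.last k, F p =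
      ∑ p ∈ quasiShuffles n m k, F (snocLast p.1, fun j => (p.2 j).castSucc) := by
  refine (Finset.sum_nbij
    (fun p : (Fin n → Fin k) × (Fin m → Fin k) => (snocLast p.1, fun j => (p.2 j).castSucc))
    (fun p hp => ?_) (fun p _ q _ hpq => ?_) (fun q hq => ?_) fun _ _ => rfl).symm
  · exact Finset.mem_filter.2
      ⟨snocLast_castSucc_mem_quasiShuffles.2 hp, ⟨_, snocLast_last _⟩, by simp⟩
  · simp only [Prod.mk.injEq] at hpq
    exact Prod.ext (snocLast_injective hpq.1)
      (funext fun j => Fin.castSucc_injective _ (congrFun hpq.2 j))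
  · obtain ⟨hmem, ⟨i, hi⟩, hh⟩ := Finset.mem_filter.1 hq
    obtain ⟨hg, -, -⟩ := mem_quasiShuffles.1 hmem
    obtain ⟨g', hg'⟩ := exists_snocLast_eq hg (apply_last_eq_last hg.monotone hi)
    obtain ⟨h', hh'⟩ := exists_castSucc_eq fun j hj => hh ⟨j, hj⟩
    obtain ⟨g, h⟩ := q
    subst hg' hh'
    exact ⟨(g', h'), snocLast_castSucc_mem_quasiShuffles.1 hmem, rfl⟩

lemma sum_quasiShuffles_right_hits_last
    (F : (Fin n → Fin (k + 1)) × (Fin (m + 1) → Fin (k + 1)) → M) :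
    ∑ p ∈ quasiShuffles n (m + 1) (k + 1) with
        (¬∃ i, p.1 i = Fin.last k) ∧ ∃ j, p.2 j = Fin.last k, F p =
      ∑ p ∈ quasiShuffles n m k, F (fun i => (p.1 i).castSucc, snocLast p.2) := by
  refine (Finset.sum_nbij
    (fun p : (Fin n → Fin k) × (Fin m → Fin k) => (fun i => (p.1 i).castSucc, snocLast p.2))
    (fun p hp => ?_) (fun p _ q _ hpq => ?_) (fun q hq => ?_) fun _ _ => rfl).symm
  · exact Finset.mem_filter.2
      ⟨castSucc_snocLast_mem_quasiShuffles.2 hp, by simp, ⟨_, snocLast_last _⟩⟩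
  · simp only [Prod.mk.injEq] at hpq
    exact Prod.ext (funext fun i => Fin.castSucc_injective _ (congrFun hpq.1 i))
      (snocLast_injective hpq.2)
  · obtain ⟨hmem, hg, ⟨j, hj⟩⟩ := Finset.mem_filter.1 hq
    obtain ⟨-, hh, -⟩ := mem_quasiShuffles.1 hmem
    obtain ⟨g', hg'⟩ := exists_castSucc_eq fun i hi => hg ⟨i, hi⟩
    obtain ⟨h', hh'⟩ := exists_snocLast_eq hh (apply_last_eq_last hh.monotone hj)
    obtain ⟨g, h⟩ := q
    subst hg' hh'
    exact ⟨(g', h'), castSucc_snocLast_mem_quasiShuffles.1 hmem, rfl⟩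

lemma sum_quasiShuffles_both_hit_last
    (F : (Fin (n + 1) → Fin (k + 1)) × (Fin (m + 1) → Fin (k + 1)) → M) :
    ∑ p ∈ quasiShuffles (n + 1) (m + 1) (k + 1) with
        (∃ i, p.1 i = Fin.last k) ∧ ∃ j, p.2 j = Fin.last k, F p =
      ∑ p ∈ quasiShuffles n m k, F (snocLast p.1, snocLast p.2) := by
  refine (Finset.sum_nbij
    (fun p : (Fin n → Fin k) × (Fin m → Fin k) => (snocLast p.1, snocLast p.2))
    (fun p hp => ?_) (fun p _ q _ hpq => ?_) (fun q hq => ?_) fun _ _ => rfl).symm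
  · exact Finset.mem_filter.2
      ⟨snocLast_snocLast_mem_quasiShuffles.2 hp, ⟨_, snocLast_last _⟩, ⟨_, snocLast_last _⟩⟩
  · simp only [Prod.mk.injEq] at hpq
    exact Prod.ext (snocLast_injective hpq.1) (snocLast_injective hpq.2)
  · obtain ⟨hmem, ⟨i, hi⟩, ⟨j, hj⟩⟩ := Finset.mem_filter.1 hq
    obtain ⟨hg, hh, -⟩ := mem_quasiShuffles.1 hmem
    obtain ⟨g', hg'⟩ := exists_snocLast_eq hg (apply_last_eq_last hg.monotone hi)
    obtain ⟨h', hh'⟩ := exists_snocLast_eq hh (apply_last_eq_last hh.monotone hj)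
    obtain ⟨g, h⟩ := q
    subst hg' hh'
    exact ⟨(g', h'), snocLast_snocLast_mem_quasiShuffles.1 hmem, rfl⟩

end Pieces

variable (mul : A →ₗ[ℚ] A →ₗ[ℚ] A)

/-- `f(a₁⋯aₙ b₁⋯bₘ)`, for the surjection `f` with restrictions `g` and `h`. -/
def surjWord (a : Fin n → A) (b : Fin m → A) (g : Fin n → Fin k) (h : Fin m → Fin k) :
    TensorAlgebra ℚ A :=
  word (List.ofFn fun t => listProd mul (fiber a g t ++ fiber b h t))

def surjSum (a : Fin n → A) (b : Fin m → A) : TensorAlgebra ℚ A :=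
  ∑ k ∈ Finset.range (n + m + 1), ∑ p ∈ quasiShuffles n m k, surjWord mul a b p.1 p.2

lemma word_append_singleton (l : List A) (x : A) :
    word (l ++ [x]) = word l * TensorAlgebra.ι ℚ x := by
  simp [word]

lemma surjWord_succ (a : Fin n → A) (b : Fin m → A) (g : Fin n → Fin (k + 1))
    (h : Fin m → Fin (k + 1)) :
    surjWord mul a b g h =
      word (List.ofFn fun t : Fin k =>
          listProd mul (fiber a g t.castSucc ++ fiber b h t.castSucc)) *
        TensorAlgebra.ι ℚ (listProd mul (fiber a g (Fin.last k) ++ fiber b h (Fin.last k))) := by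
  rw [surjWord, List.ofFn_succ_last, word_append_singleton]

lemma surjWord_snocLast_castSucc (a : Fin (n + 1) → A) (b : Fin m → A) (g : Fin n → Fin k)
    (h : Fin m → Fin k) :
    surjWord mul a b (snocLast g) (fun j => (h j).castSucc) =
      surjWord mul (Fin.init a) b g h * TensorAlgebra.ι ℚ (a (Fin.last n)) := by
  rw [surjWord_succ]
  simp [surjWord, listProd]

lemma surjWord_castSucc_snocLast (a : Fin n → A) (b : Fin (m + 1) → A) (g : Fin n → Fin k)
    (h : Fin m → Fin k) :
    surjWord mul a b (fun i => (g i).castSucc) (snocLast h) =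
      surjWord mul a (Fin.init b) g h * TensorAlgebra.ι ℚ (b (Fin.last m)) := by
  rw [surjWord_succ]
  simp [surjWord, listProd]

lemma surjWord_snocLast_snocLast (a : Fin (n + 1) → A) (b : Fin (m + 1) → A) (g : Fin n → Fin k)
    (h : Fin m → Fin k) :
    surjWord mul a b (snocLast g) (snocLast h) = surjWord mul (Fin.init a) (Fin.init b) g h *
      TensorAlgebra.ι ℚ (mul (a (Fin.last n)) (b (Fin.last m))) := by
  rw [surjWord_succ]
  simp [surjWord, listProd]

lemma surjSum_eq_sum_range {N : ℕ} (hN : n + m < N) (a : Fin n → A) (b : Fin m → A) :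
    surjSum mul a b = ∑ k ∈ Finset.range N, ∑ p ∈ quasiShuffles n m k, surjWord mul a b p.1 p.2 :=
  Finset.sum_subset (Finset.range_subset_range.2 hN) fun k _ hk => by
    rw [quasiShuffles_eq_empty (by simp at hk; omega), Finset.sum_empty]

lemma surjSum_eq_sum_Icc (a : Fin n → A) (b : Fin m → A) :
    surjSum mul a b =
      ∑ k ∈ Finset.Icc (max n m) (n + m), ∑ p ∈ quasiShuffles n m k, surjWord mul a b p.1 p.2 :=
  (Finset.sum_subset (fun k hk => by simp at hk ⊢; omega) fun k _ hk => by
    rw [quasiShuffles_eq_empty (by simp at hk; omega), Finset.sum_empty]).symm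

lemma surjSum_zero_left (a : Fin 0 → A) (b : Fin m → A) :
    surjSum mul a b = word (List.ofFn b) := by
  rw [surjSum, Finset.sum_eq_single_of_mem m (by simp) fun k hk hkm => by
    rw [quasiShuffles_eq_empty (by simp at hk; omega), Finset.sum_empty]]
  simp [quasiShuffles_zero_left, surjWord, fiber_id, listProd]

lemma surjSum_zero_right (a : Fin n → A) (b : Fin 0 → A) :
    surjSum mul a b = word (List.ofFn a) := by
  rw [surjSum, Finset.sum_eq_single_of_mem n (by simp) fun k hk hkn => by
    rw [quasiShuffles_eq_empty (by simp at hk; omega), Finset.sum_empty]]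
  simp [quasiShuffles_zero_right, surjWord, fiber_id, listProd]

lemma sum_quasiShuffles_succ (a : Fin (n + 1) → A) (b : Fin (m + 1) → A) (k : ℕ) :
    ∑ p ∈ quasiShuffles (n + 1) (m + 1) (k + 1), surjWord mul a b p.1 p.2 =
      (∑ p ∈ quasiShuffles n (m + 1) k, surjWord mul (Fin.init a) b p.1 p.2) *
          TensorAlgebra.ι ℚ (a (Fin.last n)) +
        (∑ p ∈ quasiShuffles (n + 1) m k, surjWord mul a (Fin.init b) p.1 p.2) *
          TensorAlgebra.ι ℚ (b (Fin.last m)) +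
        (∑ p ∈ quasiShuffles n m k, surjWord mul (Fin.init a) (Fin.init b) p.1 p.2) *
          TensorAlgebra.ι ℚ (mul (a (Fin.last n)) (b (Fin.last m))) := by
  rw [Finset.sum_split_of_forall_or fun p hp => (mem_quasiShuffles.1 hp).2.2 (Fin.last k),
    sum_quasiShuffles_left_hits_last, sum_quasiShuffles_right_hits_last,
    sum_quasiShuffles_both_hit_last]
  simp only [surjWord_snocLast_castSucc, surjWord_castSucc_snocLast, surjWord_snocLast_snocLast,
    Finset.sum_mul]

lemma surjSum_succ_succ (a : Fin (n + 1) → A) (b : Fin (m + 1) → A) :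
    surjSum mul a b =
      surjSum mul (Fin.init a) b * TensorAlgebra.ι ℚ (a (Fin.last n)) +
        surjSum mul a (Fin.init b) * TensorAlgebra.ι ℚ (b (Fin.last m)) +
        surjSum mul (Fin.init a) (Fin.init b) *
          TensorAlgebra.ι ℚ (mul (a (Fin.last n)) (b (Fin.last m))) := by
  rw [surjSum, Finset.sum_range_succ', quasiShuffles_eq_empty (.inl n.succ_pos), Finset.sum_empty,
    add_zero]
  simp only [sum_quasiShuffles_succ, Finset.sum_add_distrib, ← Finset.sum_mul]
  rw [surjSum_eq_sum_range mul (N := n + 1 + (m + 1)) (by omega) (Fin.init a) b,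
    surjSum_eq_sum_range mul (N := n + 1 + (m + 1)) (by omega) a (Fin.init b),
    surjSum_eq_sum_range mul (N := n + 1 + (m + 1)) (by omega) (Fin.init a) (Fin.init b)]

theorem sh_eq_surjSum (sh : TensorAlgebra ℚ A → TensorAlgebra ℚ A → TensorAlgebra ℚ A)
    (hsh_one_left : ∀ x, sh 1 x = x) (hsh_one_right : ∀ x, sh x 1 = x)
    (hsh_append : ∀ (l l' : List A) (a b : A),
      sh (word (l ++ [a])) (word (l' ++ [b])) =
        sh (word l) (word (l' ++ [b])) * TensorAlgebra.ι ℚ a +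
          sh (word (l ++ [a])) (word l') * TensorAlgebra.ι ℚ b +
          sh (word l) (word l') * TensorAlgebra.ι ℚ (mul a b))
    (a : Fin n → A) (b : Fin m → A) :
    sh (word (List.ofFn a)) (word (List.ofFn b)) = surjSum mul a b := by
  induction n generalizing m with
  | zero => exact (hsh_one_left _).trans (surjSum_zero_left mul a b).symm
  | succ n ihn =>
    induction m with
    | zero => exact (hsh_one_right _).trans (surjSum_zero_right mul a b).symm
    | succ m ihm =>
      rw [surjSum_succ_succ, ← ihn, ← ihm, ← ihn, List.ofFn_succ_last (f := a),
        List.ofFn_succ_last (f := b), hsh_append]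
      rfl

lemma sum_surjections_eq_sum_quasiShuffles (c : Fin (n + m) → A) (k : ℕ) :
    ∑ f ∈ (Finset.univ : Finset (Fin (n + m) → Fin k)).filter
        (fun f => Function.Surjective f ∧
          (∀ i j : Fin (n + m), i < j → (j : ℕ) < n → f i < f j) ∧
          (∀ i j : Fin (n + m), i < j → n ≤ (i : ℕ) → f i < f j)),
      word (List.ofFn fun t : Fin k =>
        listProd mul (((List.finRange (n + m)).filter (fun i => f i = t)).map c)) =
    ∑ p ∈ quasiShuffles n m k,
      surjWord mul (fun i => c (Fin.castAdd m i)) (fun j => c (Fin.natAdd n j)) p.1 p.2 := by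
  refine Finset.sum_equiv (Fin.appendEquiv n m).symm (fun f => ?_) fun f _ => ?_
  · simp [mem_quasiShuffles, Function.Surjective, Fin.exists_fin_add, strictMono_comp_castAdd_iff,
      strictMono_comp_natAdd_iff]
    exact and_rotate
  · simp only [surjWord, Fin.appendEquiv_symm_apply, ← fiber_add]
    rfl

end QuasiShuffle

theorem quasiShuffle_eq_sum_surjections_general
    (mul : A →ₗ[ℚ] A →ₗ[ℚ] A)
    (up down bul sh :
      TensorAlgebra ℚ A →ₗ[ℚ] TensorAlgebra ℚ A →ₗ[ℚ] TensorAlgebra ℚ A)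
    (hsh_one_left : ∀ x, sh 1 x = x)
    (hsh_one_right : ∀ x, sh x 1 = x)
    (hsh_sum : ∀ (l m : List A) (a b : A),
      sh (word (l ++ [a])) (word (m ++ [b]))
        = up (word (l ++ [a])) (word (m ++ [b]))
          + down (word (l ++ [a])) (word (m ++ [b]))
          + bul (word (l ++ [a])) (word (m ++ [b])))
    (hup : ∀ (l m : List A) (a b : A),
      up (word (l ++ [a])) (word (m ++ [b]))
        = sh (word l) (word (m ++ [b])) * TensorAlgebra.ι ℚ a)
    (hdown : ∀ (l m : List A) (a b : A),
      down (word (l ++ [a])) (word (m ++ [b]))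
        = sh (word (l ++ [a])) (word m) * TensorAlgebra.ι ℚ b)
    (hbul : ∀ (l m : List A) (a b : A),
      bul (word (l ++ [a])) (word (m ++ [b]))
        = sh (word l) (word m) * TensorAlgebra.ι ℚ (mul a b))
    : ∀ (n m : ℕ), 1 ≤ n → 1 ≤ m → ∀ c : Fin (n + m) → A,
      sh (word (List.ofFn fun i : Fin n => c (Fin.castAdd m i)))
         (word (List.ofFn fun j : Fin m => c (Fin.natAdd n j)))
        = ∑ k ∈ Finset.Icc (max n m) (n + m),
            ∑ f ∈ (Finset.univ : Finset (Fin (n + m) → Fin k)).filter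
                (fun f => Function.Surjective f ∧
                  (∀ i j : Fin (n + m), i < j → (j : ℕ) < n → f i < f j) ∧
                  (∀ i j : Fin (n + m), i < j → n ≤ (i : ℕ) → f i < f j)),
              word (List.ofFn fun t : Fin k =>
                listProd mul (((List.finRange (n + m)).filter (fun i => f i = t)).map c)) := by
  intro n m _ _ c
  rw [QuasiShuffle.sh_eq_surjSum mul (fun x y => sh x y) hsh_one_left hsh_one_right
      (fun l l' a b => by rw [hsh_sum, hup, hdown, hbul]),
    QuasiShuffle.surjSum_eq_sum_Icc]
  exact Finset.sum_congr rfl fun k _ =>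
    (QuasiShuffle.sum_surjections_eq_sum_quasiShuffles mul c k).symm

/-- Explicit expression of the quasi-shuffle product in terms of
surjections: for `n, m ≥ 1` and letters `c 0, …, c (n+m-1)` (the first `n` being the
`aᵢ`'s and the last `m` the `bⱼ`'s),
`a₁⋯a_n ⧢ b₁⋯b_m = ∑_f f(a₁⋯a_n b₁⋯b_m)`, where `f` runs over all surjections
`[n+m] ↠ [k]`, `max(n,m) ≤ k ≤ n+m`, increasing on the first `n` and on the last `m`
positions, and `f(c₁⋯c_N) := (∗-prod of the c_j, j ∈ f⁻¹(1)) ⊗ ⋯ ⊗ (∗-prod, j ∈ f⁻¹(k))`. -/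
theorem quasiShuffle_eq_sum_surjections
    (mul : A →ₗ[ℚ] A →ₗ[ℚ] A)
    (hmul_comm : ∀ a b : A, mul a b = mul b a)
    (hmul_assoc : ∀ a b c : A, mul (mul a b) c = mul a (mul b c))
    (up down bul sh :
      TensorAlgebra ℚ A →ₗ[ℚ] TensorAlgebra ℚ A →ₗ[ℚ] TensorAlgebra ℚ A)
    (hsh_one_left : ∀ x, sh 1 x = x)
    (hsh_one_right : ∀ x, sh x 1 = x)
    (hsh_sum : ∀ (l m : List A) (a b : A),
      sh (word (l ++ [a])) (word (m ++ [b]))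
        = up (word (l ++ [a])) (word (m ++ [b]))
          + down (word (l ++ [a])) (word (m ++ [b]))
          + bul (word (l ++ [a])) (word (m ++ [b])))
    (hup : ∀ (l m : List A) (a b : A),
      up (word (l ++ [a])) (word (m ++ [b]))
        = sh (word l) (word (m ++ [b])) * TensorAlgebra.ι ℚ a)
    (hdown : ∀ (l m : List A) (a b : A),
      down (word (l ++ [a])) (word (m ++ [b]))
        = sh (word (l ++ [a])) (word m) * TensorAlgebra.ι ℚ b)
    (hbul : ∀ (l m : List A) (a b : A),
      bul (word (l ++ [a])) (word (m ++ [b]))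
        = sh (word l) (word m) * TensorAlgebra.ι ℚ (mul a b))
    : ∀ (n m : ℕ), 1 ≤ n → 1 ≤ m → ∀ c : Fin (n + m) → A,
      sh (word (List.ofFn fun i : Fin n => c (Fin.castAdd m i)))
         (word (List.ofFn fun j : Fin m => c (Fin.natAdd n j)))
        = ∑ k ∈ Finset.Icc (max n m) (n + m),
            ∑ f ∈ (Finset.univ : Finset (Fin (n + m) → Fin k)).filter
                (fun f => Function.Surjective f ∧
                  (∀ i j : Fin (n + m), i < j → (j : ℕ) < n → f i < f j) ∧
                  (∀ i j : Fin (n + m), i < j → n ≤ (i : ℕ) → f i < f j)),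
              word (List.ofFn fun t : Fin k =>
                listProd mul (((List.finRange (n + m)).filter (fun i => f i = t)).map c)) :=
  quasiShuffle_eq_sum_surjections_general mul up down bul sh hsh_one_left hsh_one_right hsh_sum hup
    hdown hbul

end
end

section
/- The quasi-shuffle product ⧢ on the tensor module T(A) over a commutative associative ℚ-algebra A is commutative: x ⧢ y = y ⧢ x for all x, y ∈ T(A). -/
/-!
On words the recursion is symmetric under exchanging the two arguments, because `a ∗ b = b ∗ a`;
so `sh (word l) (word m) = sh (word m) (word l)` follows by induction on `l` and `m`, peeling off
last letters. Words span `T(A)`, and `sh` is bilinear, so commutativity extends to all of `T(A)`.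
-/

open scoped Classical

noncomputable section

variable {A : Type*} [AddCommGroup A] [Module ℚ A]

theorem word_nil : word ([] : List A) = 1 := rfl

theorem range_word :
    Set.range (word (A := A)) = Submonoid.closure (Set.range (TensorAlgebra.ι ℚ (M := A))) := by
  rw [Submonoid.closure_eq_image_prod, ← Set.range_list_map, ← Set.range_comp]
  rfl

theorem span_range_word : Submodule.span ℚ (Set.range (word (A := A))) = ⊤ := by
  rw [range_word, ← Algebra.adjoin_eq_span, TensorAlgebra.adjoin_range_ι, Algebra.top_toSubmodule]

theorem sh_word_comm (mul : A → A → A) (hmul_comm : ∀ a b, mul a b = mul b a)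
    (sh : TensorAlgebra ℚ A → TensorAlgebra ℚ A → TensorAlgebra ℚ A)
    (hsh_one_left : ∀ x, sh 1 x = x) (hsh_one_right : ∀ x, sh x 1 = x)
    (hsh_append : ∀ (l m : List A) (a b : A),
      sh (word (l ++ [a])) (word (m ++ [b]))
        = sh (word l) (word (m ++ [b])) * TensorAlgebra.ι ℚ a
          + sh (word (l ++ [a])) (word m) * TensorAlgebra.ι ℚ b
          + sh (word l) (word m) * TensorAlgebra.ι ℚ (mul a b))
    (l m : List A) : sh (word l) (word m) = sh (word m) (word l) := by
  induction l using List.reverseRecOn generalizing m with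
  | nil => rw [word_nil, hsh_one_left, hsh_one_right]
  | append_singleton l a ihl =>
    induction m using List.reverseRecOn with
    | nil => rw [word_nil, hsh_one_left, hsh_one_right]
    | append_singleton m b ihm =>
      rw [hsh_append, hsh_append, ihl (m ++ [b]), ihl m, ihm, hmul_comm a b]
      abel

theorem quasiShuffle_comm_general
    (mul : A →ₗ[ℚ] A →ₗ[ℚ] A)
    (hmul_comm : ∀ a b : A, mul a b = mul b a)
    (up down bul sh :
      TensorAlgebra ℚ A →ₗ[ℚ] TensorAlgebra ℚ A →ₗ[ℚ] TensorAlgebra ℚ A)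
    (hsh_one_left : ∀ x, sh 1 x = x)
    (hsh_one_right : ∀ x, sh x 1 = x)
    (hsh_sum : ∀ (l m : List A) (a b : A),
      sh (word (l ++ [a])) (word (m ++ [b]))
        = up (word (l ++ [a])) (word (m ++ [b]))
          + down (word (l ++ [a])) (word (m ++ [b]))
          + bul (word (l ++ [a])) (word (m ++ [b])))
    (hup : ∀ (l m : List A) (a b : A),
      up (word (l ++ [a])) (word (m ++ [b]))
        = sh (word l) (word (m ++ [b])) * TensorAlgebra.ι ℚ a)
    (hdown : ∀ (l m : List A) (a b : A),
      down (word (l ++ [a])) (word (m ++ [b]))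
        = sh (word (l ++ [a])) (word m) * TensorAlgebra.ι ℚ b)
    (hbul : ∀ (l m : List A) (a b : A),
      bul (word (l ++ [a])) (word (m ++ [b]))
        = sh (word l) (word m) * TensorAlgebra.ι ℚ (mul a b))
    : ∀ x y : TensorAlgebra ℚ A, sh x y = sh y x := by
  have hsh_append : ∀ (l m : List A) (a b : A),
      sh (word (l ++ [a])) (word (m ++ [b]))
        = sh (word l) (word (m ++ [b])) * TensorAlgebra.ι ℚ a
          + sh (word (l ++ [a])) (word m) * TensorAlgebra.ι ℚ b
          + sh (word l) (word m) * TensorAlgebra.ι ℚ (mul a b) := fun l m a b => by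
    rw [hsh_sum, hup, hdown, hbul]
  have hword : ∀ l m : List A, sh (word l) (word m) = sh (word m) (word l) :=
    sh_word_comm (fun a b => mul a b) hmul_comm (fun x y => sh x y) hsh_one_left hsh_one_right
      hsh_append
  have hflip : sh = sh.flip :=
    LinearMap.ext_on_range span_range_word fun l =>
      LinearMap.ext_on_range span_range_word fun m => hword l m
  intro x y
  exact LinearMap.congr_fun₂ hflip x y

/-- The quasi-shuffle product `⧢` on the tensor module `T(A)` over a
commutative associative ℚ-algebra `(A, ∗)` — i.e. the bilinear operation `sh` determined,
together with half-shuffles `↑`, `↓`, `•`, by the recursions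
`a₁⋯a_n ↑ b₁⋯b_m = (a₁⋯a_{n-1} ⧢ b₁⋯b_m)a_n`,
`a₁⋯a_n ↓ b₁⋯b_m = (a₁⋯a_n ⧢ b₁⋯b_{m-1})b_m`,
`a₁⋯a_n • b₁⋯b_m = (a₁⋯a_{n-1} ⧢ b₁⋯b_{m-1})(a_n ∗ b_m)`,
`x ⧢ y = x↑y + x↓y + x•y` on nonempty words and `1 ⧢ x = x ⧢ 1 = x` —
is commutative. -/
theorem quasiShuffle_comm
    (mul : A →ₗ[ℚ] A →ₗ[ℚ] A)
    (hmul_comm : ∀ a b : A, mul a b = mul b a)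
    (hmul_assoc : ∀ a b c : A, mul (mul a b) c = mul a (mul b c))
    (up down bul sh :
      TensorAlgebra ℚ A →ₗ[ℚ] TensorAlgebra ℚ A →ₗ[ℚ] TensorAlgebra ℚ A)
    (hsh_one_left : ∀ x, sh 1 x = x)
    (hsh_one_right : ∀ x, sh x 1 = x)
    (hsh_sum : ∀ (l m : List A) (a b : A),
      sh (word (l ++ [a])) (word (m ++ [b]))
        = up (word (l ++ [a])) (word (m ++ [b]))
          + down (word (l ++ [a])) (word (m ++ [b]))
          + bul (word (l ++ [a])) (word (m ++ [b])))
    (hup : ∀ (l m : List A) (a b : A),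
      up (word (l ++ [a])) (word (m ++ [b]))
        = sh (word l) (word (m ++ [b])) * TensorAlgebra.ι ℚ a)
    (hdown : ∀ (l m : List A) (a b : A),
      down (word (l ++ [a])) (word (m ++ [b]))
        = sh (word (l ++ [a])) (word m) * TensorAlgebra.ι ℚ b)
    (hbul : ∀ (l m : List A) (a b : A),
      bul (word (l ++ [a])) (word (m ++ [b]))
        = sh (word l) (word m) * TensorAlgebra.ι ℚ (mul a b))
    : ∀ x y : TensorAlgebra ℚ A, sh x y = sh y x :=
  quasiShuffle_comm_general mul hmul_comm up down bul sh hsh_one_left hsh_one_right hsh_sum hup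
    hdown hbul

end
end

section
/- Chen's shuffle formula for iterated integrals: let t > 0 and let f_1,…,f_{n+m} : [0,t] → ℝ be continuous functions. Then F(f_1,…,f_n)(t) · F(f_{n+1},…,f_{n+m})(t) = ∑_{σ ∈ Sh_{n,m}} F(f_{σ^{-1}(1)}, f_{σ^{-1}(2)}, …, f_{σ^{-1}(n+m)})(t), where Sh_{n,m} is the set of permutations σ of [n+m] with σ(1) < ⋯ < σ(n) and σ(n+1) < ⋯ < σ(n+m). -/
/-!
Both sides vanish at `t = 0`, and by induction on `n + m` they have the same derivative:
differentiating `F(g₁,…,g_k)` peels off the outermost integrand `g_k`, and a shuffle of two words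
ends with the last letter of one of them, the rest being a shuffle of what remains. Since
`iterIntRev` reads words backwards, this is a recursion on list heads. A shuffle
`σ ∈ Sh_{n,m}` is the word `σ⁻¹(1)⋯σ⁻¹(n+m)`, an interleaving of `1⋯n` with `n+1⋯n+m`.
The integrands are only continuous on `[0,t]`, so they are first extended continuously to `ℝ`.
-/

open scoped Classical

noncomputable section

/-- Auxiliary definition: iterated integral over the simplex, the list of integrands
being given in reverse order (outermost integrand first). -/
def iterIntRev : List (ℝ → ℝ) → ℝ → ℝ
  | [] => fun _ => 1
  | g :: gs => fun t => ∫ s in (0 : ℝ)..t, iterIntRev gs s * g s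

/-- The iterated integral
`F(g₁,…,g_k)(t) = ∫_{0 ≤ s₁ ≤ ⋯ ≤ s_k ≤ t} g₁(s₁)⋯g_k(s_k) ds₁⋯ds_k`,
defined recursively by `F()(t) = 1` and
`F(g₁,…,g_k)(t) = ∫_0^t F(g₁,…,g_{k-1})(s) g_k(s) ds`. -/
def iterInt (l : List (ℝ → ℝ)) (t : ℝ) : ℝ := iterIntRev l.reverse t

/-- The set `Sh_{n,m}` of `(n,m)`-shuffles: permutations `σ` of `[n+m]` with
`σ(1) < ⋯ < σ(n)` and `σ(n+1) < ⋯ < σ(n+m)`. -/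
def shuffleSet (n m : ℕ) : Finset (Equiv.Perm (Fin (n + m))) :=
  Finset.univ.filter (fun σ =>
    (∀ i j : Fin (n + m), i < j → (j : ℕ) < n → σ i < σ j) ∧
    (∀ i j : Fin (n + m), i < j → n ≤ (i : ℕ) → σ i < σ j))

namespace List

variable {α : Type*} [DecidableEq α]

/-- The interleavings of `a` and `b`, as a set: when letters repeat, the multiplicities of the
shuffle product are lost, so this is the right object only for `(a ++ b).Nodup`. -/
def shuffles (a b : List α) : Finset (List α) :=
  {w ∈ (a ++ b).permutations.toFinset | a <+ w ∧ b <+ w}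

theorem mem_shuffles {a b w : List α} :
    w ∈ shuffles a b ↔ w ~ a ++ b ∧ a <+ w ∧ b <+ w := by
  simp [shuffles]

theorem shuffles_comm (a b : List α) : shuffles a b = shuffles b a := by
  ext w
  simp only [mem_shuffles]
  exact ⟨fun ⟨hp, ha, hb⟩ => ⟨hp.trans perm_append_comm, hb, ha⟩,
    fun ⟨hp, hb, ha⟩ => ⟨hp.trans perm_append_comm, ha, hb⟩⟩

@[simp]
theorem shuffles_nil_left (b : List α) : shuffles [] b = {b} := by
  ext w
  simp only [mem_shuffles, nil_append, nil_sublist, true_and, Finset.mem_singleton]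
  exact ⟨fun ⟨hp, hb⟩ => (hb.eq_of_length hp.length_eq.symm).symm,
    fun h => h ▸ ⟨Perm.refl _, Sublist.refl _⟩⟩

@[simp]
theorem shuffles_nil_right (a : List α) : shuffles a [] = {a} := by
  rw [shuffles_comm, shuffles_nil_left]

theorem reverse_mem_shuffles_reverse {a b w : List α} :
    w.reverse ∈ shuffles a.reverse b.reverse ↔ w ∈ shuffles a b := by
  have hp : a.reverse ++ b.reverse ~ a ++ b := (reverse_perm a).append (reverse_perm b)
  simp only [mem_shuffles, reverse_sublist]
  exact and_congr_left' ⟨fun h => (reverse_perm w).symm.trans (h.trans hp),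
    fun h => (reverse_perm w).trans (h.trans hp.symm)⟩

theorem shuffles_reverse (a b : List α) :
    shuffles a.reverse b.reverse = (shuffles a b).image reverse := by
  ext w
  rw [Finset.mem_image]
  constructor
  · intro hw
    exact ⟨w.reverse, by rwa [← reverse_mem_shuffles_reverse, reverse_reverse], reverse_reverse w⟩
  · rintro ⟨v, hv, rfl⟩
    exact reverse_mem_shuffles_reverse.2 hv

theorem cons_mem_shuffles_cons_left {x : α} {a b w : List α} (hx : x ∉ b) :
    x :: w ∈ shuffles (x :: a) b ↔ w ∈ shuffles a b := by
  have hb : b <+ x :: w ↔ b <+ w :=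
    ⟨fun h => (sublist_cons_iff.1 h).resolve_right (by rintro ⟨r, rfl, -⟩; exact hx mem_cons_self),
      fun h => h.cons x⟩
  simp only [mem_shuffles, cons_append, perm_cons, cons_sublist_cons, hb]

theorem cons_mem_shuffles_cons_right {y : α} {a b w : List α} (hy : y ∉ a) :
    y :: w ∈ shuffles a (y :: b) ↔ w ∈ shuffles a b := by
  rw [shuffles_comm, cons_mem_shuffles_cons_left hy, shuffles_comm]

theorem eq_or_eq_of_cons_mem_shuffles_cons_cons {x y c : α} {a b w : List α}
    (hnd : (x :: a ++ y :: b).Nodup) (h : c :: w ∈ shuffles (x :: a) (y :: b)) :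
    c = x ∨ c = y := by
  obtain ⟨hp, hxa, hyb⟩ := mem_shuffles.1 h
  have hcw : c ∉ w := (nodup_cons.1 (hp.nodup_iff.2 hnd)).1
  have head_eq {z : α} {l : List α} (hs : z :: l <+ c :: w) (hc : c ∈ z :: l) : c = z := by
    rcases sublist_cons_iff.1 hs with hs | ⟨r, hr, -⟩
    · exact absurd (hs.subset hc) hcw
    · exact (cons.inj hr).1.symm
  rcases mem_append.1 (hp.subset mem_cons_self) with hc | hc
  · exact .inl (head_eq hxa hc)
  · exact .inr (head_eq hyb hc)

theorem shuffles_cons_cons {x y : α} {a b : List α} (hnd : (x :: a ++ y :: b).Nodup) :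
    shuffles (x :: a) (y :: b) =
      (shuffles a (y :: b)).image (cons x) ∪ (shuffles (x :: a) b).image (cons y) := by
  have hdisj := disjoint_of_nodup_append hnd
  have hx : x ∉ y :: b := fun h => hdisj mem_cons_self h
  have hy : y ∉ x :: a := fun h => hdisj h mem_cons_self
  ext w
  rcases w with _ | ⟨c, w⟩
  · simp [mem_shuffles]
  simp only [Finset.mem_union, Finset.mem_image, cons.injEq]
  constructor
  · intro h
    rcases eq_or_eq_of_cons_mem_shuffles_cons_cons hnd h with rfl | rfl
    · exact .inl ⟨w, (cons_mem_shuffles_cons_left hx).1 h, rfl, rfl⟩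
    · exact .inr ⟨w, (cons_mem_shuffles_cons_right hy).1 h, rfl, rfl⟩
  · rintro (⟨v, hv, rfl, rfl⟩ | ⟨v, hv, rfl, rfl⟩)
    · exact (cons_mem_shuffles_cons_left hx).2 hv
    · exact (cons_mem_shuffles_cons_right hy).2 hv

theorem sum_shuffles_cons_cons {M : Type*} [AddCommMonoid M] (φ : List α → M) {x y : α}
    {a b : List α} (hnd : (x :: a ++ y :: b).Nodup) :
    ∑ w ∈ shuffles (x :: a) (y :: b), φ w =
      ∑ v ∈ shuffles a (y :: b), φ (x :: v) + ∑ v ∈ shuffles (x :: a) b, φ (y :: v) := by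
  have hxy : x ≠ y := fun h => disjoint_of_nodup_append hnd mem_cons_self (h ▸ mem_cons_self)
  rw [shuffles_cons_cons hnd, Finset.sum_union,
    Finset.sum_image fun _ _ _ _ h => cons_injective h,
    Finset.sum_image fun _ _ _ _ h => cons_injective h]
  simp only [Finset.disjoint_left, Finset.mem_image]
  rintro _ ⟨v, -, rfl⟩ ⟨v', -, h⟩
  exact hxy (cons.inj h).1.symm

theorem sublist_finRange_iff {N : ℕ} {l : List (Fin N)} : l <+ finRange N ↔ l.SortedLT :=
  ⟨fun h => ((pairwise_lt_finRange N).sublist h).sortedLT, fun h =>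
    sublist_of_subperm_of_pairwise (subperm_of_subset h.nodup fun x _ => mem_finRange x)
      h.pairwise (pairwise_lt_finRange N)⟩

theorem ofFn_sublist_ofFn_perm_inv_iff {k N : ℕ} (σ : Equiv.Perm (Fin N)) (e : Fin k → Fin N) :
    ofFn e <+ ofFn ⇑σ⁻¹ ↔ StrictMono (σ ∘ e) := by
  have hσ : (ofFn ⇑σ⁻¹).map σ = finRange N := by simp [← ofFn_id]
  rw [← sortedLT_ofFn_iff, ← sublist_finRange_iff, ← hσ, ← map_ofFn]
  constructor
  · exact Sublist.map σ
  · intro h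
    simpa [← Function.comp_assoc] using h.map ⇑σ⁻¹

theorem exists_perm_ofFn_eq_of_perm_finRange {N : ℕ} {w : List (Fin N)} (hw : w ~ finRange N) :
    ∃ σ : Equiv.Perm (Fin N), ofFn ⇑σ = w := by
  have hlen : w.length = N := by simpa using hw.length_eq
  have hinj : Function.Injective fun k => w.get (Fin.cast hlen.symm k) :=
    (nodup_iff_injective_get.1 (hw.nodup_iff.2 (nodup_finRange N))).comp (Fin.cast_injective _)
  exact ⟨Equiv.ofBijective _ (Finite.injective_iff_bijective.1 hinj),
    ext_getElem (by simp [hlen]) (by simp)⟩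

end List

theorem ofFn_castAdd_append_ofFn_natAdd (n m : ℕ) :
    List.ofFn (Fin.castAdd m) ++ List.ofFn (Fin.natAdd n) = List.finRange (n + m) := by
  rw [← List.ofFn_id, List.ofFn_add]
  rfl

theorem mem_shuffleSet_iff {n m : ℕ} {σ : Equiv.Perm (Fin (n + m))} :
    σ ∈ shuffleSet n m ↔ StrictMono (σ ∘ Fin.castAdd m) ∧ StrictMono (σ ∘ Fin.natAdd n) := by
  rw [shuffleSet, Finset.mem_filter, and_iff_right (Finset.mem_univ σ)]
  refine and_congr ⟨fun h i j hij => h _ _ hij j.isLt, fun h i j hij hj => ?_⟩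
    ⟨fun h i j hij => h _ _ ((Fin.natAdd_lt_natAdd_iff n).2 hij) (by simp), fun h i j hij hi => ?_⟩
  · simpa using @h ⟨i, (Fin.lt_def.1 hij).trans hj⟩ ⟨j, hj⟩ hij
  · have of_le {k : Fin (n + m)} (hk : n ≤ k) : ∃ k', Fin.natAdd n k' = k :=
      ⟨⟨k - n, by omega⟩, Fin.ext (by simp; omega)⟩
    obtain ⟨i, rfl⟩ := of_le hi
    obtain ⟨j, rfl⟩ := of_le (hi.trans hij.le)
    exact h ((Fin.natAdd_lt_natAdd_iff n).1 hij)

theorem shuffles_ofFn_castAdd_natAdd (n m : ℕ) :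
    (List.ofFn (Fin.castAdd m)).shuffles (List.ofFn (Fin.natAdd n)) =
      (shuffleSet n m).image fun σ : Equiv.Perm (Fin (n + m)) => List.ofFn ⇑σ⁻¹ := by
  ext w
  simp only [List.mem_shuffles, Finset.mem_image, ofFn_castAdd_append_ofFn_natAdd]
  constructor
  · rintro ⟨hp, hI, hJ⟩
    obtain ⟨τ, rfl⟩ := List.exists_perm_ofFn_eq_of_perm_finRange hp
    rw [← inv_inv τ, List.ofFn_sublist_ofFn_perm_inv_iff] at hI hJ
    exact ⟨τ⁻¹, mem_shuffleSet_iff.2 ⟨hI, hJ⟩, by rw [inv_inv]⟩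
  · rintro ⟨σ, hσ, rfl⟩
    rw [mem_shuffleSet_iff] at hσ
    rw [List.ofFn_sublist_ofFn_perm_inv_iff, List.ofFn_sublist_ofFn_perm_inv_iff, ← List.ofFn_id]
    exact ⟨σ⁻¹.ofFn_comp_perm id, hσ⟩

theorem continuous_iterIntRev {l : List (ℝ → ℝ)} (hl : ∀ g ∈ l, Continuous g) :
    Continuous (iterIntRev l) := by
  induction l with
  | nil => exact continuous_const
  | cons g l ih =>
    rw [List.forall_mem_cons] at hl
    exact intervalIntegral.continuous_primitive
      (fun _ _ => ((ih hl.2).mul hl.1).intervalIntegrable _ _) 0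

theorem hasDerivAt_iterIntRev_cons {g : ℝ → ℝ} {l : List (ℝ → ℝ)} (hg : Continuous g)
    (hl : ∀ h ∈ l, Continuous h) (t : ℝ) :
    HasDerivAt (iterIntRev (g :: l)) (iterIntRev l t * g t) t :=
  (((continuous_iterIntRev hl).mul hg).integral_hasStrictDerivAt 0 t).hasDerivAt

@[simp]
theorem iterIntRev_nil (t : ℝ) : iterIntRev [] t = 1 := rfl

theorem iterIntRev_cons_zero (g : ℝ → ℝ) (l : List (ℝ → ℝ)) : iterIntRev (g :: l) 0 = 0 :=
  intervalIntegral.integral_same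

theorem iterIntRev_map_mul_iterIntRev_map {ι : Type*} [DecidableEq ι] {g : ι → ℝ → ℝ}
    (hg : ∀ i, Continuous (g i)) {a b : List ι} (hab : (a ++ b).Nodup) (t : ℝ) :
    iterIntRev (a.map g) t * iterIntRev (b.map g) t =
      ∑ w ∈ a.shuffles b, iterIntRev (w.map g) t := by
  have hcont (l : List ι) : ∀ h ∈ l.map g, Continuous h := by simpa using fun i _ => hg i
  induction a generalizing b t with
  | nil => simp
  | cons x a iha =>
    induction b generalizing t with
    | nil => simp
    | cons y b ihb =>
      have hnd₁ : (a ++ y :: b).Nodup := hab.sublist (List.sublist_cons_self _ _)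
      have hnd₂ : (x :: a ++ b).Nodup := hab.sublist ((List.sublist_cons_self y b).append_left _)
      set D : ℝ → ℝ := fun u => iterIntRev (a.map g) u * g x u * iterIntRev ((y :: b).map g) u +
        iterIntRev ((x :: a).map g) u * (iterIntRev (b.map g) u * g y u)
      have hsum (u : ℝ) : ∑ w ∈ (x :: a).shuffles (y :: b), iterIntRev (w.map g) u =
          ∑ v ∈ a.shuffles (y :: b), iterIntRev ((x :: v).map g) u +
            ∑ v ∈ (x :: a).shuffles b, iterIntRev ((y :: v).map g) u :=
        List.sum_shuffles_cons_cons _ hab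
      have hL (u : ℝ) : HasDerivAt (fun u => iterIntRev ((x :: a).map g) u *
          iterIntRev ((y :: b).map g) u) (D u) u :=
        (hasDerivAt_iterIntRev_cons (hg x) (hcont a) u).mul
          (hasDerivAt_iterIntRev_cons (hg y) (hcont b) u)
      have hR (u : ℝ) : HasDerivAt (fun u => ∑ w ∈ (x :: a).shuffles (y :: b),
          iterIntRev (w.map g) u) (D u) u := by
        simp_rw [hsum]
        refine ((HasDerivAt.fun_sum fun v _ => hasDerivAt_iterIntRev_cons (hg x) (hcont v) u).add
          (HasDerivAt.fun_sum fun v _ => hasDerivAt_iterIntRev_cons (hg y) (hcont v) u)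
          ).congr_deriv ?_
        rw [← Finset.sum_mul, ← Finset.sum_mul, ← iha hnd₁ u, ← ihb hnd₂ u]
        ring
      have hdiff (u : ℝ) := ((hL u).fun_sub (hR u)).congr_deriv (sub_self _)
      have := is_const_of_deriv_eq_zero (fun u => (hdiff u).differentiableAt)
        (fun u => (hdiff u).deriv) t 0
      simpa [hsum, iterIntRev_cons_zero, sub_eq_zero] using this

theorem iterInt_map_mul_iterInt_map {ι : Type*} [DecidableEq ι] {g : ι → ℝ → ℝ}
    (hg : ∀ i, Continuous (g i)) {a b : List ι} (hab : (a ++ b).Nodup) (t : ℝ) :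
    iterInt (a.map g) t * iterInt (b.map g) t = ∑ w ∈ a.shuffles b, iterInt (w.map g) t := by
  have hrev : (a.reverse ++ b.reverse).Nodup :=
    (((List.reverse_perm a).append (List.reverse_perm b)).nodup_iff).2 hab
  simp only [iterInt, ← List.map_reverse]
  rw [iterIntRev_map_mul_iterIntRev_map hg hrev, List.shuffles_reverse,
    Finset.sum_image fun _ _ _ _ h => List.reverse_injective h]

theorem iterIntRev_map_congr {ι : Type*} {g g' : ι → ℝ → ℝ} {T : ℝ}
    (h : ∀ i, Set.EqOn (g i) (g' i) (Set.Icc 0 T)) (l : List ι) {s : ℝ} (hs : s ∈ Set.Icc 0 T) :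
    iterIntRev (l.map g) s = iterIntRev (l.map g') s := by
  induction l generalizing s with
  | nil => rfl
  | cons i l ih =>
    refine intervalIntegral.integral_congr fun u hu => ?_
    rw [Set.uIcc_of_le hs.1] at hu
    have hu' : u ∈ Set.Icc 0 T := ⟨hu.1, hu.2.trans hs.2⟩
    simp only [ih hu', h i hu']

theorem iterInt_ofFn_congr {k : ℕ} {g g' : Fin k → ℝ → ℝ} {T : ℝ}
    (h : ∀ i, Set.EqOn (g i) (g' i) (Set.Icc 0 T)) (hT : 0 ≤ T) :
    iterInt (List.ofFn g) T = iterInt (List.ofFn g') T := by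
  simp only [iterInt, List.ofFn_eq_map, ← List.map_reverse]
  exact iterIntRev_map_congr h _ ⟨hT, le_rfl⟩

theorem ContinuousOn.exists_continuous_eqOn_Icc {α β : Type*} [LinearOrder α] [TopologicalSpace α]
    [OrderTopology α] [TopologicalSpace β] {a b : α} (hab : a ≤ b) {f : α → β}
    (hf : ContinuousOn f (Set.Icc a b)) : ∃ F : α → β, Continuous F ∧ Set.EqOn f F (Set.Icc a b) :=
  ⟨Set.IccExtend hab ((Set.Icc a b).domRestrict f), hf.domRestrict.Icc_extend',
    fun _ hx => (Set.IccExtend_of_mem hab ((Set.Icc a b).domRestrict f) hx).symm⟩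

theorem iterInt_mul_iterInt_eq_sum_shuffleSet {n m : ℕ} {f : Fin (n + m) → ℝ → ℝ}
    (hf : ∀ i, Continuous (f i)) (t : ℝ) :
    iterInt (List.ofFn fun i : Fin n => f (Fin.castAdd m i)) t
        * iterInt (List.ofFn fun j : Fin m => f (Fin.natAdd n j)) t
      = ∑ σ ∈ shuffleSet n m, iterInt (List.ofFn fun i : Fin (n + m) => f (σ⁻¹ i)) t := by
  have hnd : (List.ofFn (Fin.castAdd m) ++ List.ofFn (Fin.natAdd n)).Nodup := by
    rw [ofFn_castAdd_append_ofFn_natAdd]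
    exact List.nodup_finRange _
  have hinj : Function.Injective fun σ : Equiv.Perm (Fin (n + m)) => List.ofFn ⇑σ⁻¹ :=
    fun σ τ h => inv_injective (DFunLike.coe_injective (List.ofFn_injective h))
  have hmap {k : ℕ} (e : Fin k → Fin (n + m)) :
      List.ofFn (fun i => f (e i)) = (List.ofFn e).map f :=
    List.map_ofFn.symm
  simp only [hmap]
  rw [iterInt_map_mul_iterInt_map hf hnd, shuffles_ofFn_castAdd_natAdd, Finset.sum_image hinj.injOn]

/-- Chen's shuffle formula for iterated integrals: for `t > 0` and
continuous functions `f₁,…,f_{n+m}` on `[0,t]`,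
`F(f₁,…,f_n)(t) · F(f_{n+1},…,f_{n+m})(t)
  = ∑_{σ ∈ Sh_{n,m}} F(f_{σ⁻¹(1)},…,f_{σ⁻¹(n+m)})(t)`. -/
theorem chen_shuffle_formula (t : ℝ) (ht : 0 < t) (n m : ℕ)
    (f : Fin (n + m) → ℝ → ℝ)
    (hf : ∀ i, ContinuousOn (f i) (Set.Icc 0 t)) :
    iterInt (List.ofFn fun i : Fin n => f (Fin.castAdd m i)) t
        * iterInt (List.ofFn fun j : Fin m => f (Fin.natAdd n j)) t
      = ∑ σ ∈ shuffleSet n m,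
          iterInt (List.ofFn fun i : Fin (n + m) => f (σ⁻¹ i)) t := by
  choose F hF hfF using fun i => (hf i).exists_continuous_eqOn_Icc ht.le
  have hcongr {k : ℕ} (e : Fin k → Fin (n + m)) :
      iterInt (List.ofFn fun i => f (e i)) t = iterInt (List.ofFn fun i => F (e i)) t :=
    iterInt_ofFn_congr (fun i => hfF (e i)) ht.le
  rw [hcongr, hcongr, iterInt_mul_iterInt_eq_sum_shuffleSet hF]
  exact Finset.sum_congr rfl fun σ _ => (hcongr _).symm

end
end
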